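/- arXiv:2010.01381 — 5 statements merged into one kernel-verified Lean document; each statement's English description precedes it below -/
import Mathlib

section
/- Let t_{k−1} < t_k < t_{k+1} be reals, τ_{k−1} = t_k − t_{k−1}, τ_k = t_{k+1} − t_k. Let ε_{k−1}⁺, ε_k⁻, ε_k⁺, ε_{k+1}⁻, M_{k−1}, M_k, M_{k+1}, ṙ_k, r̈_k, r̈_{k+1} be reals. Let c_{k−1} be the cubic with data (endpoint values ε_{k−1}⁺, ε_k⁻ and endpoint second derivatives M_{k−1}, M_k + r̈_k) on [t_{k−1}, t_k], and let c_k be the cubic with data (endpoint values ε_k⁺, ε_{k+1}⁻ and endpoint second derivatives M_k, M_{k+1} + r̈_{k+1}) on [t_k, t_{k+1}]. Then the first-derivative matching condition c'_{k−1}(t_k) = c'_k(t_k) + ṙ_k holds if and only if μ_k M_{k−1} + 2 M_k + λ_k M_{k+1} = d_k, where μ_k = τ_{k−1}/(τ_{k−1}+τ_k), λ_k = τ_k/(τ_{k−1}+τ_k), and d_k = 6·((ε_{k+1}⁻ − ε_k⁺)/τ_k − (ε_k⁻ − ε_{k−1}⁺)/τ_{k−1})/(τ_{k−1}+τ_k)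 + (6ṙ_k − 2r̈_k τ_{k−1} − r̈_{k+1} τ_k)/(τ_{k−1}+τ_k). -/
/-- The cubic with data (endpoint values `εp, εm` and endpoint second derivatives `M, M'`)
on `[a, b]`:
`c(t) = ((M̂ − M)/(6τ))(t − a)³ + (M/2)(t − a)² + ((ε⁻ − ε⁺)/τ − τ(M̂ + 2M)/6)(t − a) + ε⁺`
with `τ = b − a`. -/
noncomputable def cubicWith (a b εp εm M M' : ℝ) : ℝ → ℝ := fun t =>
  ((M' - M) / (6 * (b - a))) * (t - a) ^ 3 + (M / 2) * (t - a) ^ 2 +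
    ((εm - εp) / (b - a) - (b - a) * (M' + 2 * M) / 6) * (t - a) + εp

/-!
At `t_k` the left cubic has slope `(ε_k⁻ − ε_{k−1}⁺)/τ_{k−1} + τ_{k−1}(2(M_k + r̈_k) + M_{k−1})/6`
and the right one `(ε_{k+1}⁻ − ε_k⁺)/τ_k − τ_k(M_{k+1} + r̈_{k+1} + 2M_k)/6`, so the matching
condition is one linear equation in the `M`'s; multiplied by `6/(τ_{k−1} + τ_k)` it is the row.
-/

theorem hasDerivAt_cubicWith (a b εp εm M M' t : ℝ) :
    HasDerivAt (cubicWith a b εp εm M M')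
      ((M' - M) / (6 * (b - a)) * (3 * (t - a) ^ 2) + M / 2 * (2 * (t - a)) +
        ((εm - εp) / (b - a) - (b - a) * (M' + 2 * M) / 6)) t := by
  have hshift : HasDerivAt (fun x : ℝ => x - a) 1 t := (hasDerivAt_id t).sub_const a
  have hcube := (hshift.fun_pow 3).const_mul ((M' - M) / (6 * (b - a)))
  have hsq := (hshift.fun_pow 2).const_mul (M / 2)
  have hlin := hshift.const_mul ((εm - εp) / (b - a) - (b - a) * (M' + 2 * M) / 6)
  refine (((hcube.fun_add hsq).fun_add hlin).add_const εp).congr_deriv ?_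
  norm_num

theorem deriv_cubicWith_left (a b εp εm M M' : ℝ) :
    deriv (cubicWith a b εp εm M M') a =
      (εm - εp) / (b - a) - (b - a) * (M' + 2 * M) / 6 := by
  rw [(hasDerivAt_cubicWith a b εp εm M M' a).deriv]
  ring

theorem deriv_cubicWith_right {a b : ℝ} (hab : a ≠ b) (εp εm M M' : ℝ) :
    deriv (cubicWith a b εp εm M M') b =
      (εm - εp) / (b - a) + (b - a) * (2 * M' + M) / 6 := by
  rw [(hasDerivAt_cubicWith a b εp εm M M' b).deriv]
  field_simp [sub_ne_zero.mpr hab.symm]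
  ring

/-- the first-derivative matching condition
`c'_{k−1}(t_k) = c'_k(t_k) + ṙ_k` holds iff `μ_k M_{k−1} + 2 M_k + λ_k M_{k+1} = d_k`. -/
theorem cssc_tridiagonal_row (tkm1 tk tk1 : ℝ) (h1 : tkm1 < tk) (h2 : tk < tk1)
    (εpkm1 εmk εpk εmk1 Mkm1 Mk Mk1 rd rdd_k rdd_k1 : ℝ) :
    (deriv (cubicWith tkm1 tk εpkm1 εmk Mkm1 (Mk + rdd_k)) tk =
        deriv (cubicWith tk tk1 εpk εmk1 Mk (Mk1 + rdd_k1)) tk + rd) ↔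
      ((tk - tkm1) / ((tk - tkm1) + (tk1 - tk))) * Mkm1 + 2 * Mk +
          ((tk1 - tk) / ((tk - tkm1) + (tk1 - tk))) * Mk1 =
        6 * ((εmk1 - εpk) / (tk1 - tk) - (εmk - εpkm1) / (tk - tkm1)) /
            ((tk - tkm1) + (tk1 - tk)) +
          (6 * rd - 2 * rdd_k * (tk - tkm1) - rdd_k1 * (tk1 - tk)) /
            ((tk - tkm1) + (tk1 - tk)) := by
  rw [deriv_cubicWith_right h1.ne, deriv_cubicWith_left]
  have hτ₀ : 0 < tk - tkm1 := sub_pos.mpr h1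
  have hτ₁ : 0 < tk1 - tk := sub_pos.mpr h2
  generalize tk - tkm1 = τ₀ at *
  generalize tk1 - tk = τ₁ at *
  have hscale : 6 / (τ₀ + τ₁) ≠ 0 := by positivity
  -- the residual of the row is `6 / (τ₀ + τ₁)` times the residual of the slope condition
  rw [← sub_eq_zero, ← mul_eq_zero_iff_left hscale, ← sub_eq_zero (a := _ * Mkm1 + _ + _)]
  apply Eq.congr_left
  field_simp
  ring
end

section
/- Let a = t_0 < t_1 < … < t_n = b be a partition of [a, b] with maximum spacing τ = max_k (t_k − t_{k−1}), and let K ≥ 0. Let e : [a, b] → ℝ be twice continuously differentiable on [a, b], and suppose that on each open subinterval (t_{k−1}, t_k) the function e is four times differentiable with |e⁗(t)| ≤ K for all t in each open subinterval. Assume e(t_k) = 0 for all 0 ≤ k ≤ n, and e''(a) = e''(b) = 0. Then |e'(t_k)| ≤ (1/24)·K·τ³ for every 0 ≤ k ≤ n. -/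
/-!
On a subinterval `[c, d]` of length `h`, the cubic-spline end relations
`2 e'(c) + e'(d) + (h/2) e''(c) = 3 (e(d) - e(c)) / h` and
`e'(c) + 2 e'(d) - (h/2) e''(d) = 3 (e(d) - e(c)) / h` hold exactly for cubics. The defect of
the second is `(2h)⁻¹ ∫ (s - c)² (d - s) e⁗(s) ds`, with a nonnegative kernel of integral
`h⁴ / 12`, so it is at most `K h³ / 24`; the first is its mirror image. Since `e` vanishes at
the knots, this bounds two linear combinations of `e'` and `e''` at consecutive knots. At a knot
where `|e'|` is maximal, adding the two relations meeting there with weights `1 / h` eliminates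
`e''` and leaves a diagonally dominant combination of `e'`, which forces `|e'| ≤ K τ³ / 24`; at
the two ends the natural boundary condition `e'' = 0` plays the same role.
-/

open Set Filter Topology

lemma iteratedDerivWithin_of_mem_nhds {f : ℝ → ℝ} {s : Set ℝ} {x : ℝ} (n : ℕ)
    (hs : s ∈ 𝓝 x) :
    iteratedDerivWithin n f s x = iteratedDeriv n f x := by
  simp only [iteratedDerivWithin, iteratedDeriv,
    iteratedFDerivWithin_congr_set (eventuallyEq_univ.2 hs), iteratedFDerivWithin_univ]

lemma hasDerivAt_iteratedDerivWithin_of_mem_nhds {f : ℝ → ℝ} {s : Set ℝ} {x : ℝ} {n : ℕ}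
    (hs : s ∈ 𝓝 x) (hf : DifferentiableAt ℝ (iteratedDeriv n f) x) :
    HasDerivAt (iteratedDerivWithin n f s) (iteratedDerivWithin (n + 1) f s x) x := by
  rw [iteratedDerivWithin_of_mem_nhds _ hs, iteratedDeriv_succ]
  refine hf.hasDerivAt.congr_of_eventuallyEq ?_
  filter_upwards [eventually_mem_nhds_iff.2 hs] with y hy
  exact iteratedDerivWithin_of_mem_nhds n hy

lemma continuousWithinAt_mul_of_eq_zero_of_bounded {X : Type*} [TopologicalSpace X]
    {k g : X → ℝ} {s : Set X} {p : X} {M : ℝ} (hk : ContinuousWithinAt k s p) (hkp : k p = 0)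
    (hg : ∀ x ∈ s, |g x| ≤ M) : ContinuousWithinAt (fun x => k x * g x) s p := by
  rw [ContinuousWithinAt, hkp, zero_mul]
  rw [ContinuousWithinAt, hkp] at hk
  exact hk.zero_mul_isBoundedUnder_le
    (isBoundedUnder_of_eventually_le (a := M) (eventually_nhdsWithin_of_forall hg))

lemma sub_le_sub_of_hasDerivAt_le {G g H h : ℝ → ℝ} {a b : ℝ} (hab : a ≤ b)
    (hG : ContinuousOn G (Icc a b)) (hH : ContinuousOn H (Icc a b))
    (hG' : ∀ x ∈ Ioo a b, HasDerivAt G (g x) x) (hH' : ∀ x ∈ Ioo a b, HasDerivAt H (h x) x)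
    (hgh : ∀ x ∈ Ioo a b, g x ≤ h x) : G b - G a ≤ H b - H a := by
  have mono : MonotoneOn (fun x => H x - G x) (Icc a b) :=
    monotoneOn_of_hasDerivWithinAt_nonneg (convex_Icc a b) (hH.sub hG)
      (fun x hx => by
        rw [interior_Icc] at hx ⊢
        exact ((hH' x hx).sub (hG' x hx)).hasDerivWithinAt)
      (fun x hx => by
        rw [interior_Icc] at hx
        exact sub_nonneg.2 (hgh x hx))
  linarith [mono (left_mem_Icc.2 hab) (right_mem_Icc.2 hab) hab]

lemma abs_sub_le_sub_of_hasDerivAt_abs_le {G g H h : ℝ → ℝ} {a b : ℝ} (hab : a ≤ b)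
    (hG : ContinuousOn G (Icc a b)) (hH : ContinuousOn H (Icc a b))
    (hG' : ∀ x ∈ Ioo a b, HasDerivAt G (g x) x) (hH' : ∀ x ∈ Ioo a b, HasDerivAt H (h x) x)
    (hgh : ∀ x ∈ Ioo a b, |g x| ≤ h x) : |G b - G a| ≤ H b - H a := by
  have upper := sub_le_sub_of_hasDerivAt_le hab hG hH hG' hH' fun x hx => (abs_le.1 (hgh x hx)).2
  have lower := sub_le_sub_of_hasDerivAt_le (G := fun x => -G x) hab hG.neg hH
    (fun x hx => (hG' x hx).neg) hH' fun x hx => neg_le.1 (abs_le.1 (hgh x hx)).1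
  rw [abs_sub_le_iff]
  constructor <;> linarith

lemma exists_abs_le_of_abs_deriv_le {g g' : ℝ → ℝ} {c d K : ℝ} (hcd : c < d)
    (hg : ∀ x ∈ Ioo c d, HasDerivAt g (g' x) x) (hK : ∀ x ∈ Ioo c d, |g' x| ≤ K) :
    ∃ M, ∀ x ∈ Icc c d, |g x| ≤ M := by
  obtain ⟨m, hcm, hmd⟩ := exists_between hcd
  refine ⟨max (max |g c| |g d|) (|g m| + K * (d - c)), fun x hx => ?_⟩
  rcases hx.1.eq_or_lt with rfl | hcx
  · simp
  rcases hx.2.eq_or_lt with rfl | hxd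
  · simp
  have lip : |g x - g m| ≤ K * |x - m| :=
    (convex_Ioo c d).norm_image_sub_le_of_norm_hasDerivWithin_le
      (fun y hy => (hg y hy).hasDerivWithinAt) hK ⟨hcm, hmd⟩ ⟨hcx, hxd⟩
  have hxm : |x - m| ≤ d - c := abs_le.2 ⟨by linarith, by linarith⟩
  have hK₀ : 0 ≤ K := (abs_nonneg _).trans (hK m ⟨hcm, hmd⟩)
  refine le_max_of_le_right ?_
  nlinarith [abs_sub_abs_le_abs_sub (g x) (g m)]

lemma continuousOn_mul_of_bounded_of_eq_zero {k g : ℝ → ℝ} {c d M : ℝ} (hk : Continuous k)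
    (hkc : k c = 0) (hkd : k d = 0) (hg : ContinuousOn g (Ioo c d))
    (hM : ∀ x ∈ Icc c d, |g x| ≤ M) : ContinuousOn (fun x => k x * g x) (Icc c d) := by
  intro x hx
  rcases hx.1.eq_or_lt with rfl | hcx
  · exact continuousWithinAt_mul_of_eq_zero_of_bounded hk.continuousWithinAt hkc hM
  rcases hx.2.eq_or_lt with rfl | hxd
  · exact continuousWithinAt_mul_of_eq_zero_of_bounded hk.continuousWithinAt hkd hM
  exact (hk.continuousAt.mul ((hg x ⟨hcx, hxd⟩).continuousAt
    (isOpen_Ioo.mem_nhds ⟨hcx, hxd⟩))).continuousWithinAt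

theorem abs_spline_relation_right_le {f : ℕ → ℝ → ℝ} {c d K : ℝ} (hcd : c < d)
    (hcont : ∀ i < 3, ContinuousOn (f i) (Icc c d))
    (hderiv : ∀ i < 4, ∀ x ∈ Ioo c d, HasDerivAt (f i) (f (i + 1) x) x)
    (hbound : ∀ x ∈ Ioo c d, |f 4 x| ≤ K) :
    |f 1 c + 2 * f 1 d - (d - c) / 2 * f 2 d - 3 * (f 0 d - f 0 c) / (d - c)|
      ≤ K * (d - c) ^ 3 / 24 := by
  set Q := f 1 c + 2 * f 1 d - (d - c) / 2 * f 2 d - 3 * (f 0 d - f 0 c) / (d - c)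
  have hh : 0 < d - c := sub_pos.2 hcd
  set k : ℝ → ℝ := fun s => (s - c) ^ 2 * (d - s)
  set k₁ : ℝ → ℝ := fun s => 2 * (s - c) * (d - s) - (s - c) ^ 2
  set k₂ : ℝ → ℝ := fun s => 2 * (d - s) - 4 * (s - c)
  have hk : ∀ x, HasDerivAt k (k₁ x) x := fun x =>
    ((((hasDerivAt_id' x).sub_const c).fun_pow 2).fun_mul
      ((hasDerivAt_id' x).const_sub d)).congr_deriv (by push_cast; ring)
  have hk₁ : ∀ x, HasDerivAt k₁ (k₂ x) x := fun x =>
    (((((hasDerivAt_id' x).sub_const c).const_mul 2).fun_mul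
      ((hasDerivAt_id' x).const_sub d)).sub
      (((hasDerivAt_id' x).sub_const c).fun_pow 2)).congr_deriv (by push_cast; ring)
  have hk₂ : ∀ x, HasDerivAt k₂ (-6) x := fun x =>
    ((((hasDerivAt_id' x).const_sub d).const_mul 2).sub
      (((hasDerivAt_id' x).sub_const c).const_mul 4)).congr_deriv (by ring)
  -- Three integrations by parts against the kernel `k`: `G' = k · f 4`.
  set G : ℝ → ℝ := fun s => k s * f 3 s - k₁ s * f 2 s + k₂ s * f 1 s + 6 * f 0 s
  set H : ℝ → ℝ := fun s => K * ((d - c) * (s - c) ^ 3 / 3 - (s - c) ^ 4 / 4)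
  have hG' : ∀ x ∈ Ioo c d, HasDerivAt G (k x * f 4 x) x := fun x hx =>
    (((((hk x).fun_mul (hderiv 3 (by norm_num) x hx)).sub
      ((hk₁ x).fun_mul (hderiv 2 (by norm_num) x hx))).add
      ((hk₂ x).fun_mul (hderiv 1 (by norm_num) x hx))).add
      ((hderiv 0 (by norm_num) x hx).const_mul 6)).congr_deriv (by ring)
  have hH' : ∀ x, HasDerivAt H (K * k x) x := fun x =>
    (((((((hasDerivAt_id' x).sub_const c).fun_pow 3).const_mul (d - c)).div_const 3).sub
      ((((hasDerivAt_id' x).sub_const c).fun_pow 4).div_const 4)).const_mul K).congr_deriv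
      (by push_cast; ring)
  obtain ⟨M, hM⟩ := exists_abs_le_of_abs_deriv_le hcd (hderiv 3 (by norm_num)) hbound
  -- `f 3` need not be continuous at `c` and `d`, but it is bounded and `k` vanishes there.
  have hGcont : ContinuousOn G (Icc c d) := by
    have hkf : ContinuousOn (fun s => k s * f 3 s) (Icc c d) :=
      continuousOn_mul_of_bounded_of_eq_zero (by fun_prop) (by simp [k]) (by simp [k])
        (fun x hx => (hderiv 3 (by norm_num) x hx).continuousAt.continuousWithinAt) hM
    exact ((hkf.sub ((by fun_prop : Continuous k₁).continuousOn.mul (hcont 2 (by norm_num)))).add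
      ((by fun_prop : Continuous k₂).continuousOn.mul (hcont 1 (by norm_num)))).add
      (continuousOn_const.mul (hcont 0 (by norm_num)))
  have key := abs_sub_le_sub_of_hasDerivAt_abs_le hcd.le hGcont
    (fun x _ => (hH' x).continuousAt.continuousWithinAt) hG' (fun x _ => hH' x) fun x hx => by
      have hkx : 0 ≤ k x := mul_nonneg (sq_nonneg _) (by linarith [hx.2])
      rw [abs_mul, abs_of_nonneg hkx, mul_comm]
      exact mul_le_mul_of_nonneg_right (hbound x hx) hkx
  have hGdc : G d - G c = -(2 * (d - c)) * Q := by
    simp only [G, k, k₁, k₂, Q]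
    field_simp
    ring
  have hHdc : H d - H c = 2 * (d - c) * (K * (d - c) ^ 3 / 24) := by
    simp only [H]
    ring
  rw [hGdc, hHdc, abs_mul, abs_neg, abs_of_pos (by positivity)] at key
  exact le_of_mul_le_mul_left key (by positivity)

theorem abs_spline_relation_left_le {f : ℕ → ℝ → ℝ} {c d K : ℝ} (hcd : c < d)
    (hcont : ∀ i < 3, ContinuousOn (f i) (Icc c d))
    (hderiv : ∀ i < 4, ∀ x ∈ Ioo c d, HasDerivAt (f i) (f (i + 1) x) x)
    (hbound : ∀ x ∈ Ioo c d, |f 4 x| ≤ K) :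
    |2 * f 1 c + f 1 d + (d - c) / 2 * f 2 c - 3 * (f 0 d - f 0 c) / (d - c)|
      ≤ K * (d - c) ^ 3 / 24 := by
  -- The right relation for `s ↦ f (c + d - s)` is the negated left relation for `f`.
  have hreflect : ∀ x, HasDerivAt (fun s => c + d - s) (-1) x := fun x =>
    (hasDerivAt_id' x).const_sub (c + d)
  have hmaps : MapsTo (fun s => c + d - s) (Ioo c d) (Ioo c d) := fun x hx =>
    ⟨by linarith [hx.2], by linarith [hx.1]⟩
  have := abs_spline_relation_right_le (f := fun i s => (-1) ^ i * f i (c + d - s)) hcd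
    (fun i hi => continuousOn_const.mul ((hcont i hi).comp (by fun_prop)
      fun x hx => ⟨by linarith [hx.2], by linarith [hx.1]⟩))
    (fun i hi x hx => (((hderiv i hi _ (hmaps hx)).scomp x (hreflect x)).const_mul _).congr_deriv
      (by simp only [smul_eq_mul]; ring))
    (fun x hx => by simpa using hbound _ (hmaps hx))
  rw [← abs_neg]
  convert this using 2
  simp only [add_sub_cancel_left, add_sub_cancel_right]
  ring

lemma abs_le_of_abs_two_mul_add_le {x z E : ℝ} (hz : |z| ≤ |x|) (h : |2 * x + z| ≤ E) :
    |x| ≤ E := by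
  rw [abs_le] at h ⊢
  constructor <;> cases abs_cases x <;> cases abs_cases z <;> linarith

lemma abs_le_of_abs_relations_le {x y z m p q E : ℝ} (hp : 0 < p) (hq : 0 < q)
    (hy : |y| ≤ |x|) (hz : |z| ≤ |x|) (h₁ : |y + 2 * x - p * m| ≤ E)
    (h₂ : |2 * x + z + q * m| ≤ E) : |x| ≤ E := by
  -- `q h₁ + p h₂` eliminates `m`.
  rw [abs_le] at h₁ h₂ hy hz
  have hpq : 0 < p + q := add_pos hp hq
  rcases abs_cases x with ⟨hx, -⟩ | ⟨hx, -⟩ <;> rw [hx] at hy hz ⊢ <;>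
    refine le_of_mul_le_mul_left ?_ hpq <;> nlinarith [mul_le_mul_of_nonneg_left h₁.1 hq.le]

theorem abs_le_of_spline_relations {n : ℕ} (hn : 1 ≤ n) {t D M : ℕ → ℝ} {E : ℝ}
    (ht : ∀ j, 1 ≤ j → j ≤ n → t (j - 1) < t j) (hM₀ : M 0 = 0) (hMₙ : M n = 0)
    (hrel : ∀ j, 1 ≤ j → j ≤ n →
      |2 * D (j - 1) + D j + (t j - t (j - 1)) / 2 * M (j - 1)| ≤ E ∧
        |D (j - 1) + 2 * D j - (t j - t (j - 1)) / 2 * M j| ≤ E) :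
    ∀ k ≤ n, |D k| ≤ E := by
  obtain ⟨j, hj, hmax⟩ := Finset.exists_max_image (Finset.range (n + 1)) (fun i => |D i|)
    ⟨0, by simp⟩
  replace hj : j ≤ n := Nat.lt_succ_iff.1 (Finset.mem_range.1 hj)
  replace hmax : ∀ i ≤ n, |D i| ≤ |D j| := fun i hi =>
    hmax i (Finset.mem_range.2 (Nat.lt_succ_of_le hi))
  suffices |D j| ≤ E from fun k hk => (hmax k hk).trans this
  have hstep : ∀ j, 1 ≤ j → j ≤ n → 0 < (t j - t (j - 1)) / 2 := fun j hj hjn =>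
    half_pos (sub_pos.2 (ht j hj hjn))
  rcases Nat.eq_zero_or_pos j with rfl | hj₀
  · have h₁ := (hrel 1 le_rfl hn).1
    simp only [Nat.sub_self, hM₀, mul_zero, add_zero] at h₁
    exact abs_le_of_abs_two_mul_add_le (hmax 1 hn) h₁
  rcases hj.eq_or_lt with rfl | hjn
  · have h₁ := (hrel j hj₀ le_rfl).2
    simp only [hMₙ, mul_zero, sub_zero] at h₁
    exact abs_le_of_abs_two_mul_add_le (hmax (j - 1) (Nat.sub_le _ _)) (by rwa [add_comm])
  have h₂ := (hrel (j + 1) (by omega) hjn).1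
  rw [Nat.add_sub_cancel] at h₂
  exact abs_le_of_abs_relations_le (hstep j hj₀ hj) (hstep (j + 1) (by omega) hjn)
    (hmax _ (by omega)) (hmax _ hjn) (hrel j hj₀ hj).2 h₂

lemma abs_spline_relations_le_of_iteratedDerivWithin {e : ℝ → ℝ} {s : Set ℝ} {c d K : ℝ}
    (hcd : c < d) (hs : UniqueDiffOn ℝ s) (hsub : Icc c d ⊆ s) (hC2 : ContDiffOn ℝ 2 e s)
    (hdiff4 : ∀ x ∈ Ioo c d,
      (∀ i < 4, DifferentiableAt ℝ (deriv^[i] e) x) ∧ |deriv^[4] e x| ≤ K)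
    (hc : e c = 0) (hd : e d = 0) :
    |2 * derivWithin e s c + derivWithin e s d + (d - c) / 2 * iteratedDerivWithin 2 e s c|
        ≤ K * (d - c) ^ 3 / 24 ∧
      |derivWithin e s c + 2 * derivWithin e s d - (d - c) / 2 * iteratedDerivWithin 2 e s d|
        ≤ K * (d - c) ^ 3 / 24 := by
  have hnhds : ∀ x ∈ Ioo c d, s ∈ 𝓝 x := fun x hx =>
    mem_of_superset (Icc_mem_nhds hx.1 hx.2) hsub
  have hcont : ∀ i < 3, ContinuousOn (fun x => iteratedDerivWithin i e s x) (Icc c d) :=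
    fun i hi => (hC2.continuousOn_iteratedDerivWithin (by norm_cast; omega) hs).mono hsub
  have hderiv : ∀ i < 4, ∀ x ∈ Ioo c d, HasDerivAt (fun x => iteratedDerivWithin i e s x)
      (iteratedDerivWithin (i + 1) e s x) x := fun i hi x hx =>
    hasDerivAt_iteratedDerivWithin_of_mem_nhds (hnhds x hx)
      (by rw [iteratedDeriv_eq_iterate]; exact (hdiff4 x hx).1 i hi)
  have hbound : ∀ x ∈ Ioo c d, |iteratedDerivWithin 4 e s x| ≤ K := fun x hx => by
    rw [iteratedDerivWithin_of_mem_nhds 4 (hnhds x hx), iteratedDeriv_eq_iterate]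
    exact (hdiff4 x hx).2
  have hleft := abs_spline_relation_left_le hcd hcont hderiv hbound
  have hright := abs_spline_relation_right_le hcd hcont hderiv hbound
  simp only [iteratedDerivWithin_zero, iteratedDerivWithin_one, hc, hd, sub_self, mul_zero,
    zero_div, sub_zero] at hleft hright
  exact ⟨hleft, hright⟩

/-- Hall–Meyer Lemma, r = 1 case: if `e` is `C²` on `[a,b] = [t_0, t_n]`,
four times differentiable with `|e⁗| ≤ K` on each open subinterval of the partition,
vanishes at all knots, and satisfies the natural boundary condition `e''(a) = e''(b) = 0`,
then `|e'(t_k)| ≤ (1/24)·K·τ³` at every knot, where `τ` bounds the knot spacings. -/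
theorem hall_meyer_first_deriv_knot_bound (n : ℕ) (hn : 1 ≤ n) (t : ℕ → ℝ)
    (ht : ∀ k, 1 ≤ k → k ≤ n → t (k - 1) < t k)
    (τ : ℝ) (hτ : ∀ k, 1 ≤ k → k ≤ n → t k - t (k - 1) ≤ τ)
    (K : ℝ) (hK : 0 ≤ K) (e : ℝ → ℝ)
    (hC2 : ContDiffOn ℝ 2 e (Set.Icc (t 0) (t n)))
    (hdiff4 : ∀ k, 1 ≤ k → k ≤ n → ∀ s ∈ Set.Ioo (t (k - 1)) (t k),
      (∀ i < 4, DifferentiableAt ℝ (deriv^[i] e) s) ∧ |deriv^[4] e s| ≤ K)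
    (hknots : ∀ k ≤ n, e (t k) = 0)
    (hbda : iteratedDerivWithin 2 e (Set.Icc (t 0) (t n)) (t 0) = 0)
    (hbdb : iteratedDerivWithin 2 e (Set.Icc (t 0) (t n)) (t n) = 0) :
    ∀ k ≤ n, |derivWithin e (Set.Icc (t 0) (t n)) (t k)| ≤ (1 / 24) * K * τ ^ 3 := by
  have hmono : MonotoneOn t (Iic n) :=
    (strictMonoOn_Iic_of_lt_succ fun m hm => by simpa using ht (m + 1) (by omega) hm).monotoneOn
  have hab : t 0 < t n :=
    (hmono (by simp) (by simp) (Nat.zero_le (n - 1))).trans_lt (ht n hn le_rfl)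
  rw [show 1 / 24 * K * τ ^ 3 = K * τ ^ 3 / 24 by ring]
  refine abs_le_of_spline_relations (M := fun k => iteratedDerivWithin 2 e (Icc (t 0) (t n)) (t k))
    hn ht hbda hbdb fun j hj hjn => ?_
  have hsub : Icc (t (j - 1)) (t j) ⊆ Icc (t 0) (t n) :=
    Icc_subset_Icc (hmono (by simp) (by simp; omega) (Nat.zero_le _))
      (hmono (by simpa using hjn) (by simp) hjn)
  have hcube : K * (t j - t (j - 1)) ^ 3 / 24 ≤ K * τ ^ 3 / 24 := by
    have := sub_pos.2 (ht j hj hjn)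
    gcongr
    exact hτ j hj hjn
  exact (abs_spline_relations_le_of_iteratedDerivWithin (ht j hj hjn) (uniqueDiffOn_Icc hab)
    hsub hC2 (hdiff4 j hj hjn) (hknots _ (by omega)) (hknots j hjn)).imp
    (·.trans hcube) (·.trans hcube)
end

section
/- Let t_i < t_{i+1} be reals and K ≥ 0. Let v : [t_i, t_{i+1}] → ℝ be four times continuously differentiable with |v⁗(t)| ≤ K for all t ∈ [t_i, t_{i+1}]. Let u be the cubic Hermite interpolant of v, i.e., the unique polynomial of degree at most 3 with u(t_i) = v(t_i), u(t_{i+1}) = v(t_{i+1}), u'(t_i) = v'(t_i), u'(t_{i+1}) = v'(t_{i+1}). Then for every t ∈ [t_i, t_{i+1}], |v(t) − u(t)| ≤ K·[(t − t_i)(t_{i+1} − t)]²/24. -/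
open Set Polynomial Topology

/-!
Fix `t ∈ (a, b)` and choose `A` so that `e = v - u - A · ((x - a)(b - x))²` also vanishes at `t`.
Then `e` vanishes at `a, t, b` and `e'` at `a, b`. Rolle's theorem gives two zeros of `e'` in
`(a, t)` and `(t, b)`, hence four zeros of `e'` in all, and three more applications yield `ξ`
with `e⁗(ξ) = 0`, i.e. `v⁗(ξ) = 24 A`. So `|A| ≤ K / 24`, which is the bound.
-/

theorem exists_strictMono_hasDerivAt_eq_zero {f f' : ℝ → ℝ} {a b : ℝ} {n : ℕ}
    {z : Fin (n + 2) → ℝ} (hf : ContinuousOn f (Icc a b))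
    (hf' : ∀ x ∈ Ioo a b, HasDerivAt f (f' x) x) (hz : StrictMono z) (hzI : ∀ i, z i ∈ Icc a b)
    (hz0 : ∀ i, f (z i) = 0) :
    ∃ y : Fin (n + 1) → ℝ, StrictMono y ∧ (∀ i, y i ∈ Ioo a b) ∧ ∀ i, f' (y i) = 0 := by
  choose y hy hy0 using fun i : Fin (n + 1) =>
    exists_hasDerivAt_eq_zero (hz i.castSucc_lt_succ)
      (hf.mono (Icc_subset_Icc (hzI _).1 (hzI _).2)) (by rw [hz0, hz0])
      fun x hx => hf' x (Ioo_subset_Ioo (hzI _).1 (hzI _).2 hx)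
  refine ⟨y, Fin.strictMono_iff_lt_succ.2 fun i => ?_, fun i => ?_, hy0⟩
  · calc y i.castSucc < z i.castSucc.succ := (hy _).2
      _ = z i.succ.castSucc := rfl
      _ < y i.succ := (hy _).1
  · exact ⟨(hzI _).1.trans_lt (hy i).1, (hy i).2.trans_le (hzI _).2⟩

theorem exists_eq_zero_of_hasDerivAt_chain {g : ℕ → ℝ → ℝ} {a b : ℝ} {m : ℕ}
    (hc : ∀ k < m, ContinuousOn (g k) (Icc a b))
    (hd : ∀ k < m, ∀ x ∈ Ioo a b, HasDerivAt (g k) (g (k + 1) x) x)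
    {z : Fin (m + 1) → ℝ} (hz : StrictMono z) (hzI : ∀ i, z i ∈ Icc a b)
    (hz0 : ∀ i, g 0 (z i) = 0) :
    ∃ ξ ∈ Icc a b, g m ξ = 0 := by
  induction m generalizing g with
  | zero => exact ⟨z 0, hzI 0, hz0 0⟩
  | succ m ih =>
    obtain ⟨y, hy, hyI, hy0⟩ :=
      exists_strictMono_hasDerivAt_eq_zero (hc 0 m.succ_pos) (hd 0 m.succ_pos) hz hzI hz0
    exact ih (g := fun k => g (k + 1)) (fun k hk => hc _ (Nat.succ_lt_succ hk))
      (fun k hk => hd _ (Nat.succ_lt_succ hk)) hy (fun i => Ioo_subset_Icc_self (hyI i)) hy0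

theorem exists_eq_zero_of_hasDerivAt_chain_of_hermite_zeros {g : ℕ → ℝ → ℝ} {a b t : ℝ}
    (ht : t ∈ Ioo a b) (hc : ∀ k < 4, ContinuousOn (g k) (Icc a b))
    (hd : ∀ k < 4, ∀ x ∈ Ioo a b, HasDerivAt (g k) (g (k + 1) x) x)
    (ha : g 0 a = 0) (htz : g 0 t = 0) (hb : g 0 b = 0) (ha' : g 1 a = 0) (hb' : g 1 b = 0) :
    ∃ ξ ∈ Icc a b, g 4 ξ = 0 := by
  have hab : a < b := ht.1.trans ht.2
  obtain ⟨y, hy, hyI, hy0⟩ := exists_strictMono_hasDerivAt_eq_zero (z := ![a, t, b])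
    (hc 0 (by norm_num)) (hd 0 (by norm_num))
    (Fin.strictMono_iff_lt_succ.2 <| by simp [Fin.forall_fin_succ, ht.1, ht.2])
    (by simp [Fin.forall_fin_succ, hab.le, ht.1.le, ht.2.le])
    (by simp [Fin.forall_fin_succ, ha, htz, hb])
  have hy01 : y 0 < y 1 := hy (by decide)
  exact exists_eq_zero_of_hasDerivAt_chain (g := fun k => g (k + 1)) (m := 3)
    (z := ![a, y 0, y 1, b])
    (fun k hk => hc _ (by omega)) (fun k hk => hd _ (by omega))
    (Fin.strictMono_iff_lt_succ.2 <| by simp [Fin.forall_fin_succ, (hyI 0).1, hy01, (hyI 1).2])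
    (by simp [Fin.forall_fin_succ, hab.le, (hyI 0).1.le, (hyI 0).2.le, (hyI 1).1.le, (hyI 1).2.le])
    (by simp [Fin.forall_fin_succ, ha', hy0, hb'])

theorem ContDiffOn.hasDerivAt_iteratedDerivWithin {v : ℝ → ℝ} {s : Set ℝ} {n k : ℕ} {x : ℝ}
    (hv : ContDiffOn ℝ n v s) (hs : UniqueDiffOn ℝ s) (hk : k < n) (hx : s ∈ 𝓝 x) :
    HasDerivAt (iteratedDerivWithin k v s) (iteratedDerivWithin (k + 1) v s x) x := by
  rw [iteratedDerivWithin_succ]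
  exact ((hv.differentiableOn_iteratedDerivWithin (by exact_mod_cast hk) hs) x
    (mem_of_mem_nhds hx)).hasDerivWithinAt.hasDerivAt hx

theorem Polynomial.hasDerivAt_eval_iterate_derivative {𝕜 : Type*} [NontriviallyNormedField 𝕜]
    (p : 𝕜[X]) (k : ℕ) (x : 𝕜) :
    HasDerivAt (fun y => (derivative^[k] p).eval y) ((derivative^[k + 1] p).eval x) x := by
  rw [Function.iterate_succ_apply']
  exact (derivative^[k] p).hasDerivAt x

noncomputable def hermiteWeight {R : Type*} [CommRing R] (a b : R) : R[X] :=
  ((X - C a) * (C b - X)) ^ 2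

section hermiteWeight
variable {R : Type*} [CommRing R] (a b : R)

@[simp] theorem eval_hermiteWeight (x : R) :
    (hermiteWeight a b).eval x = ((x - a) * (b - x)) ^ 2 := by
  simp [hermiteWeight]

theorem eval_derivative_hermiteWeight_left : (derivative (hermiteWeight a b)).eval a = 0 := by
  simp [hermiteWeight, derivative_pow]

theorem eval_derivative_hermiteWeight_right : (derivative (hermiteWeight a b)).eval b = 0 := by
  simp [hermiteWeight, derivative_pow]

theorem iterate_derivative_four_hermiteWeight : derivative^[4] (hermiteWeight a b) = 24 := by
  have : hermiteWeight a b = (X - C a) ^ 4 - C (2 * (b - a)) * (X - C a) ^ 3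
      + C ((b - a) ^ 2) * (X - C a) ^ 2 := by
    simp only [hermiteWeight, map_mul, map_sub, map_pow, map_ofNat]
    ring
  rw [this, iterate_map_add, iterate_map_sub, iterate_derivative_C_mul, iterate_derivative_C_mul,
    iterate_derivative_X_sub_pow, iterate_derivative_X_sub_pow, iterate_derivative_X_sub_pow]
  simp [Nat.descFactorial]
end hermiteWeight

theorem exists_iteratedDerivWithin_four_eq_of_hermite_interp {v : ℝ → ℝ} {a b t : ℝ} {p : ℝ[X]}
    (hv : ContDiffOn ℝ 4 v (Icc a b)) (ht : t ∈ Ioo a b)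
    (ha : p.eval a = v a) (htv : p.eval t = v t) (hb : p.eval b = v b)
    (ha' : p.derivative.eval a = derivWithin v (Icc a b) a)
    (hb' : p.derivative.eval b = derivWithin v (Icc a b) b) :
    ∃ ξ ∈ Icc a b, iteratedDerivWithin 4 v (Icc a b) ξ = (derivative^[4] p).eval ξ := by
  have hU : UniqueDiffOn ℝ (Icc a b) := uniqueDiffOn_Icc (ht.1.trans ht.2)
  obtain ⟨ξ, hξ, hξ0⟩ := exists_eq_zero_of_hasDerivAt_chain_of_hermite_zeros
    (g := fun k x => iteratedDerivWithin k v (Icc a b) x - (derivative^[k] p).eval x) ht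
    (fun k hk => (hv.continuousOn_iteratedDerivWithin (by exact_mod_cast hk.le) hU).sub
      (derivative^[k] p).continuous.continuousOn)
    (fun k hk x hx => (hv.hasDerivAt_iteratedDerivWithin hU (by exact_mod_cast hk)
      (Icc_mem_nhds hx.1 hx.2)).sub (p.hasDerivAt_eval_iterate_derivative k x))
    (by simp [ha]) (by simp [htv]) (by simp [hb])
    (by simp [iteratedDerivWithin_one, ha']) (by simp [iteratedDerivWithin_one, hb'])
  exact ⟨ξ, hξ, sub_eq_zero.1 hξ0⟩

theorem hermite_error_bound_general (ti ti1 : ℝ) (K : ℝ)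
    (v : ℝ → ℝ)
    (hv : ContDiffOn ℝ 4 v (Set.Icc ti ti1))
    (hb : ∀ s ∈ Set.Icc ti ti1, |iteratedDerivWithin 4 v (Set.Icc ti ti1) s| ≤ K)
    (u : Polynomial ℝ) (hdeg : u.degree ≤ 3)
    (h0 : u.eval ti = v ti) (h1 : u.eval ti1 = v ti1)
    (h0' : u.derivative.eval ti = derivWithin v (Set.Icc ti ti1) ti)
    (h1' : u.derivative.eval ti1 = derivWithin v (Set.Icc ti ti1) ti1) :
    ∀ s ∈ Set.Icc ti ti1, |v s - u.eval s| ≤ K * ((s - ti) * (ti1 - s)) ^ 2 / 24 := by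
  intro t ht
  rcases ht.1.eq_or_lt with rfl | hti
  · simp [h0]
  rcases ht.2.eq_or_lt with rfl | hti1
  · simp [h1]
  have hW : 0 < (hermiteWeight ti ti1).eval t := by
    have := mul_pos (sub_pos.2 hti) (sub_pos.2 hti1)
    simp only [eval_hermiteWeight]
    positivity
  set A := (v t - u.eval t) / (hermiteWeight ti ti1).eval t
  have hA : v t - u.eval t = A * (hermiteWeight ti ti1).eval t := (div_mul_cancel₀ _ hW.ne').symm
  obtain ⟨ξ, hξ, hξA⟩ := exists_iteratedDerivWithin_four_eq_of_hermite_interp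
    (p := u + C A * hermiteWeight ti ti1) hv ⟨hti, hti1⟩
    (by simp [h0]) (by rw [eval_add, eval_mul, eval_C, ← hA]; ring) (by simp [h1])
    (by simp [eval_derivative_hermiteWeight_left, h0'])
    (by simp [eval_derivative_hermiteWeight_right, h1'])
  have hv4 : iteratedDerivWithin 4 v (Icc ti ti1) ξ = 24 * A := by
    rw [hξA, iterate_map_add, iterate_derivative_C_mul, iterate_derivative_four_hermiteWeight,
      iterate_derivative_eq_zero_of_degree_lt (hdeg.trans_lt (by norm_num))]
    simp [mul_comm]
  calc |v t - u.eval t| = |24 * A| * (hermiteWeight ti ti1).eval t / 24 := by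
        rw [hA, abs_mul, abs_mul, abs_of_pos hW]; ring
    _ ≤ K * ((t - ti) * (ti1 - t)) ^ 2 / 24 := by
        rw [← hv4, ← eval_hermiteWeight]
        gcongr
        exact hb ξ hξ

/-- Birkhoff–Priver, r = 0 case: pointwise error bound for cubic Hermite
interpolation: if `v ∈ C⁴[t_i, t_{i+1}]` with `|v⁗| ≤ K` and `u` is the cubic Hermite
interpolant of `v`, then `|v(t) − u(t)| ≤ K·[(t − t_i)(t_{i+1} − t)]²/24` on `[t_i, t_{i+1}]`. -/
theorem hermite_error_bound (ti ti1 : ℝ) (h : ti < ti1) (K : ℝ) (hK : 0 ≤ K)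
    (v : ℝ → ℝ)
    (hv : ContDiffOn ℝ 4 v (Set.Icc ti ti1))
    (hb : ∀ s ∈ Set.Icc ti ti1, |iteratedDerivWithin 4 v (Set.Icc ti ti1) s| ≤ K)
    (u : Polynomial ℝ) (hdeg : u.degree ≤ 3)
    (h0 : u.eval ti = v ti) (h1 : u.eval ti1 = v ti1)
    (h0' : u.derivative.eval ti = derivWithin v (Set.Icc ti ti1) ti)
    (h1' : u.derivative.eval ti1 = derivWithin v (Set.Icc ti ti1) ti1) :
    ∀ s ∈ Set.Icc ti ti1, |v s - u.eval s| ≤ K * ((s - ti) * (ti1 - s)) ^ 2 / 24 :=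
  hermite_error_bound_general ti ti1 K v hv hb u hdeg h0 h1 h0' h1'
end

section
/- Let t_i < t_{i+1} be reals, τ_i = t_{i+1} − t_i, and K ≥ 0. Let v : [t_i, t_{i+1}] → ℝ be four times continuously differentiable with |v⁗(t)| ≤ K for all t ∈ [t_i, t_{i+1}]. Let u be the cubic Hermite interpolant of v, i.e., the unique polynomial of degree at most 3 with u(t_i) = v(t_i), u(t_{i+1}) = v(t_{i+1}), u'(t_i) = v'(t_i), u'(t_{i+1}) = v'(t_{i+1}). Then for every t ∈ [t_i, t_{i+1}], |v'(t) − u'(t)| ≤ K·τ_i·(t − t_i)(t_{i+1} − t)/2. -/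
/-!
Put `e = v - u`. Since `e` and `e'` vanish at both nodes, Rolle's theorem gives a third zero `ξ`
of `e'` inside the interval, and two more applications give a zero of `e'''`. As `|e⁗| ≤ K`, the
mean value theorem bounds `|e'''|` by `K τ`. Finally a function `g = e'` vanishing at both ends
with `|g''| ≤ M` satisfies `|g t| ≤ M (t - tᵢ)(tᵢ₊₁ - t) / 2`: subtract the quadratic
interpolating `g` at `tᵢ, t, tᵢ₊₁` and apply Rolle twice.
-/

open Set Polynomial

theorem Polynomial.iteratedDeriv_eval {𝕜 : Type*} [NontriviallyNormedField 𝕜] (p : 𝕜[X])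
    (n : ℕ) (x : 𝕜) : iteratedDeriv n (fun x => p.eval x) x = (derivative^[n] p).eval x := by
  induction n generalizing p with
  | zero => simp
  | succ n ih =>
    have hderiv : deriv (fun x => p.eval x) = fun x => p.derivative.eval x := by
      ext; exact p.deriv
    rw [iteratedDeriv_succ', hderiv, ih, Function.iterate_succ_apply]

theorem Polynomial.contDiff_eval {𝕜 : Type*} [NontriviallyNormedField 𝕜] (p : 𝕜[X])
    {n : WithTop ℕ∞} : ContDiff 𝕜 n fun x => p.eval x :=
  p.contDiff_aeval n

theorem iteratedDerivWithin_sub_eval_of_natDegree_lt {𝕜 : Type*} [NontriviallyNormedField 𝕜]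
    {f : 𝕜 → 𝕜} {p : 𝕜[X]} {n : ℕ} {s : Set 𝕜} {x : 𝕜} (hx : x ∈ s) (hs : UniqueDiffOn 𝕜 s)
    (hf : ContDiffWithinAt 𝕜 n f s x) (hp : p.natDegree < n) :
    iteratedDerivWithin n (f - fun x => p.eval x) s x = iteratedDerivWithin n f s x := by
  rw [iteratedDerivWithin_sub hx hs hf p.contDiff_eval.contDiffWithinAt,
    iteratedDerivWithin_eq_iteratedDeriv hs p.contDiff_eval.contDiffAt hx, p.iteratedDeriv_eval,
    iterate_derivative_eq_zero hp, eval_zero, sub_zero]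

theorem exists_iteratedDeriv_two_eq_zero {f : ℝ → ℝ} {a b c : ℝ} (hab : a < b) (hbc : b < c)
    (hf : ContinuousOn f (Icc a c)) (hf' : ContinuousOn (deriv f) (Ioo a c))
    (hfab : f a = f b) (hfbc : f b = f c) : ∃ η ∈ Ioo a c, iteratedDeriv 2 f η = 0 := by
  obtain ⟨y₁, hy₁, hfy₁⟩ :=
    exists_deriv_eq_zero hab (hf.mono (Icc_subset_Icc_right hbc.le)) hfab
  obtain ⟨y₂, hy₂, hfy₂⟩ :=
    exists_deriv_eq_zero hbc (hf.mono (Icc_subset_Icc_left hab.le)) hfbc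
  have hy : Icc y₁ y₂ ⊆ Ioo a c := Icc_subset_Ioo hy₁.1 hy₂.2
  obtain ⟨η, hη, hf''η⟩ :=
    exists_deriv_eq_zero (hy₁.2.trans hy₂.1) (hf'.mono hy) (hfy₁.trans hfy₂.symm)
  exact ⟨η, hy (Ioo_subset_Icc_self hη), by rwa [iteratedDeriv_succ, iteratedDeriv_one]⟩

theorem abs_le_of_abs_iteratedDeriv_two_le {g : ℝ → ℝ} {a b M : ℝ}
    (hg : ContinuousOn g (Icc a b)) (hg' : ContDiffOn ℝ 2 g (Ioo a b))
    (hM : ∀ s ∈ Ioo a b, |iteratedDeriv 2 g s| ≤ M) (ha : g a = 0) (hb : g b = 0) :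
    ∀ t ∈ Icc a b, |g t| ≤ M * ((t - a) * (b - t)) / 2 := by
  rintro t ⟨hat, htb⟩
  rcases hat.eq_or_lt with rfl | hat
  · simp [ha]
  rcases htb.eq_or_lt with rfl | htb
  · simp [hb]
  set c := g t / ((t - a) * (t - b))
  set q : ℝ[X] := C c * (X - C a) * (X - C b)
  have hgt : g t = c * ((t - a) * (t - b)) := by
    rw [div_mul_cancel₀]; exact mul_ne_zero (sub_ne_zero.2 hat.ne') (sub_ne_zero.2 htb.ne)
  obtain ⟨η, hη, hη0⟩ : ∃ η ∈ Ioo a b, iteratedDeriv 2 (fun s => g s - q.eval s) η = 0 := by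
    refine exists_iteratedDeriv_two_eq_zero hat htb
      (hg.sub q.continuous.continuousOn) ?_ ?_ ?_
    · exact (hg'.sub q.contDiff_eval.contDiffOn).continuousOn_deriv_of_isOpen isOpen_Ioo
        (by norm_num)
    all_goals simp only [q, eval_mul, eval_sub, eval_X, eval_C, ha, hb, hgt]; ring
  have hq'' : (derivative^[2] q).eval η = 2 * c := by
    simp only [q, Function.iterate_succ, Function.iterate_zero, Function.comp_apply, id_eq,
      derivative_mul, derivative_add, derivative_sub, derivative_C, derivative_X, zero_mul,
      sub_zero, mul_one, zero_add, eval_add, eval_C]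
    ring
  have hg'' : iteratedDeriv 2 g η = 2 * c := by
    rw [iteratedDeriv_fun_sub (hg'.contDiffAt (isOpen_Ioo.mem_nhds hη))
      q.contDiff_eval.contDiffAt, q.iteratedDeriv_eval, hq''] at hη0
    linarith
  have h2c := hM η hη
  rw [hg'', abs_mul, abs_two] at h2c
  have hpos : 0 < (t - a) * (b - t) := mul_pos (sub_pos.2 hat) (sub_pos.2 htb)
  calc |g t| = |c| * ((t - a) * (b - t)) := by
        rw [hgt, abs_mul, abs_of_neg (by linarith : (t - a) * (t - b) < 0)]; ring
    _ ≤ M / 2 * ((t - a) * (b - t)) := by gcongr; linarith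
    _ = M * ((t - a) * (b - t)) / 2 := by ring

theorem abs_le_of_three_zeros_of_abs_iteratedDeriv_three_le {g : ℝ → ℝ} {a ξ b K : ℝ}
    (haξ : a < ξ) (hξb : ξ < b) (hg : ContinuousOn g (Icc a b))
    (hg' : ContDiffOn ℝ 3 g (Ioo a b)) (ha : g a = 0) (hξ : g ξ = 0) (hb : g b = 0)
    (hK : ∀ s ∈ Ioo a b, |iteratedDeriv 3 g s| ≤ K) :
    ∀ t ∈ Icc a b, |g t| ≤ K * (b - a) * ((t - a) * (b - t)) / 2 := by
  obtain ⟨z, hz, hg''z⟩ := exists_iteratedDeriv_two_eq_zero haξ hξb hg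
    (hg'.continuousOn_deriv_of_isOpen isOpen_Ioo (by norm_num)) (ha.trans hξ.symm)
    (hξ.trans hb.symm)
  have hdiff : ∀ s ∈ Ioo a b, DifferentiableAt ℝ (iteratedDeriv 2 g) s := fun s hs =>
    ((hg'.differentiableOn_iteratedDerivWithin (by norm_num) isOpen_Ioo.uniqueDiffOn).congr
      (iteratedDerivWithin_of_isOpen isOpen_Ioo).symm).differentiableAt
      (isOpen_Ioo.mem_nhds hs)
  have hg'' : ∀ s ∈ Ioo a b, |iteratedDeriv 2 g s| ≤ K * (b - a) := fun s hs => by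
    have hmvt := (convex_Ioo a b).norm_image_sub_le_of_norm_deriv_le hdiff
      (fun x hx => by rw [← iteratedDeriv_succ]; exact hK x hx) hz hs
    rw [Real.norm_eq_abs, Real.norm_eq_abs, hg''z, sub_zero] at hmvt
    refine hmvt.trans (mul_le_mul_of_nonneg_left ?_ ((abs_nonneg _).trans (hK s hs)))
    rw [abs_le]; constructor <;> linarith [hs.1, hs.2, hz.1, hz.2]
  exact abs_le_of_abs_iteratedDeriv_two_le hg (hg'.of_le (by norm_num)) hg'' ha hb

theorem abs_derivWithin_le_of_hermite_data_eq_zero {e : ℝ → ℝ} {a b K : ℝ} (hab : a < b)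
    (he : ContDiffOn ℝ 4 e (Icc a b)) (ha : e a = 0) (hb : e b = 0)
    (ha' : derivWithin e (Icc a b) a = 0) (hb' : derivWithin e (Icc a b) b = 0)
    (hK : ∀ s ∈ Ioo a b, |iteratedDerivWithin 4 e (Icc a b) s| ≤ K) :
    ∀ t ∈ Icc a b, |derivWithin e (Icc a b) t| ≤ K * (b - a) * ((t - a) * (b - t)) / 2 := by
  have hI : UniqueDiffOn ℝ (Icc a b) := uniqueDiffOn_Icc hab
  obtain ⟨ξ, hξ, he'ξ⟩ := exists_deriv_eq_zero hab he.continuousOn (ha.trans hb.symm)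
  have he' : ContDiffOn ℝ 3 (derivWithin e (Icc a b)) (Icc a b) := he.derivWithin hI (by norm_num)
  refine abs_le_of_three_zeros_of_abs_iteratedDeriv_three_le hξ.1 hξ.2 he'.continuousOn
    (he'.mono Ioo_subset_Icc_self) ha' ?_ hb' fun s hs => ?_
  · rwa [derivWithin_of_mem_nhds (Icc_mem_nhds hξ.1 hξ.2)]
  · rw [← iteratedDerivWithin_eq_iteratedDeriv hI (he'.contDiffAt (Icc_mem_nhds hs.1 hs.2))
      (Ioo_subset_Icc_self hs), ← iteratedDerivWithin_succ']
    exact hK s hs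

theorem hermite_deriv_error_bound_general (ti ti1 : ℝ) (h : ti < ti1) (K : ℝ)
    (v : ℝ → ℝ)
    (hv : ContDiffOn ℝ 4 v (Set.Icc ti ti1))
    (hb : ∀ s ∈ Set.Icc ti ti1, |iteratedDerivWithin 4 v (Set.Icc ti ti1) s| ≤ K)
    (u : Polynomial ℝ) (hdeg : u.degree ≤ 3)
    (h0 : u.eval ti = v ti) (h1 : u.eval ti1 = v ti1)
    (h0' : u.derivative.eval ti = derivWithin v (Set.Icc ti ti1) ti)
    (h1' : u.derivative.eval ti1 = derivWithin v (Set.Icc ti ti1) ti1) :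
    ∀ s ∈ Set.Icc ti ti1,
      |derivWithin v (Set.Icc ti ti1) s - u.derivative.eval s| ≤
        K * (ti1 - ti) * ((s - ti) * (ti1 - s)) / 2 := by
  have hI : UniqueDiffOn ℝ (Icc ti ti1) := uniqueDiffOn_Icc h
  have hderiv : ∀ s ∈ Icc ti ti1, derivWithin (v - fun x => u.eval x) (Icc ti ti1) s =
      derivWithin v (Icc ti ti1) s - u.derivative.eval s := fun s hs => by
    rw [derivWithin_sub (hv.differentiableOn (by norm_num) s hs) u.differentiableWithinAt,
      u.derivWithin (hI s hs)]
  have hu : u.natDegree < 4 := (natDegree_le_iff_degree_le.2 hdeg).trans_lt (by norm_num)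
  intro s hs
  rw [← hderiv s hs]
  refine abs_derivWithin_le_of_hermite_data_eq_zero (e := v - fun x => u.eval x) h
    (hv.sub u.contDiff_eval.contDiffOn)
    (by simp [h0]) (by simp [h1]) ?_ ?_ (fun x hx => ?_) s hs
  · rw [hderiv ti (left_mem_Icc.2 h.le), h0', sub_self]
  · rw [hderiv ti1 (right_mem_Icc.2 h.le), h1', sub_self]
  · rw [iteratedDerivWithin_sub_eval_of_natDegree_lt (Ioo_subset_Icc_self hx) hI
      (hv x (Ioo_subset_Icc_self hx)) hu]
    exact hb x (Ioo_subset_Icc_self hx)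

/-- Birkhoff–Priver, r = 1 case: pointwise first-derivative error bound for
cubic Hermite interpolation: if `v ∈ C⁴[t_i, t_{i+1}]` with `|v⁗| ≤ K` and `u` is the cubic
Hermite interpolant of `v`, then `|v'(t) − u'(t)| ≤ K·τ_i·(t − t_i)(t_{i+1} − t)/2` on
`[t_i, t_{i+1}]`, where `τ_i = t_{i+1} − t_i`. -/
theorem hermite_deriv_error_bound (ti ti1 : ℝ) (h : ti < ti1) (K : ℝ) (hK : 0 ≤ K)
    (v : ℝ → ℝ)
    (hv : ContDiffOn ℝ 4 v (Set.Icc ti ti1))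
    (hb : ∀ s ∈ Set.Icc ti ti1, |iteratedDerivWithin 4 v (Set.Icc ti ti1) s| ≤ K)
    (u : Polynomial ℝ) (hdeg : u.degree ≤ 3)
    (h0 : u.eval ti = v ti) (h1 : u.eval ti1 = v ti1)
    (h0' : u.derivative.eval ti = derivWithin v (Set.Icc ti ti1) ti)
    (h1' : u.derivative.eval ti1 = derivWithin v (Set.Icc ti ti1) ti1) :
    ∀ s ∈ Set.Icc ti ti1,
      |derivWithin v (Set.Icc ti ti1) s - u.derivative.eval s| ≤
        K * (ti1 - ti) * ((s - ti) * (ti1 - s)) / 2 :=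
  hermite_deriv_error_bound_general ti ti1 h K v hv hb u hdeg h0 h1 h0' h1'
end

section
/- Let a = t_0 < t_1 < … < t_n = b be a partition of [a, b] with maximum spacing τ = max_k (t_k − t_{k−1}), and let K ≥ 0. Let x : [a, b] → ℝ, o : [a, b] → ℝ, and let c : [a, b] → ℝ be piecewise cubic: on each [t_{k−1}, t_k], c agrees with a polynomial of degree at most 3. Set ô = o + c and e = x − ô. Assume: (i) e is twice continuously differentiable on [a, b]; (ii) on each open subinterval (t_{k−1}, t_k), x − o is four times differentiable with |(x − o)⁗(t)| ≤ K; (iii) e(t_k) = 0 for all 0 ≤ k ≤ n; (iv) e''(a) = e''(b) = 0. Then |x(t) − ô(t)| ≤ (5/384)·K·τ⁴ for all t ∈ [a, b]. -/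
/-!
On a piece `[α, β]` of the partition write `e = H + R`, where `H` is the cubic vanishing at `α`
and `β` with the same slopes as `e` there. Then `R` vanishes to second order at both ends and
`R⁗ = (x - o)⁗`, so Rolle's theorem applied to `R - μ q`, where `q = (u - α)²(u - β)²/24` has
`q⁗ = 1`, gives `|R| ≤ K h⁴/384` on the piece and `|R''| ≤ K h²/12` at its ends.
Continuity of `e''` at the inner knots together with `e''(a) = e''(b) = 0` turns the latter into a
diagonally dominant system for the knot slopes `mₖ = e'(tₖ)`, so `|mₖ| ≤ K τ³/24` and hence
`|H| ≤ K τ⁴/96`. Finally `1/96 + 1/384 = 5/384`.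
-/

open Set Filter Polynomial

noncomputable section

-- Families `ℕ → ℝ → ℝ` below list a function followed by its successive derivatives.
def quarticBump (α β : ℝ) : ℕ → ℝ → ℝ
  | 0 => fun u => (u - α) ^ 2 * (u - β) ^ 2 / 24
  | 1 => fun u => ((u - α) * (u - β) ^ 2 + (u - α) ^ 2 * (u - β)) / 12
  | 2 => fun u => ((u - α) ^ 2 + 4 * (u - α) * (u - β) + (u - β) ^ 2) / 12
  | 3 => fun u => u - (α + β) / 2
  | 4 => fun _ => 1
  | _ => fun _ => 0

-- The cubic vanishing at `α` and `β` with slopes `δ₁` and `δ₂` there.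
def hermiteCubic (α β δ₁ δ₂ : ℝ) : ℕ → ℝ → ℝ
  | 0 => fun s => (δ₁ * (s - α) * (s - β) ^ 2 + δ₂ * (s - α) ^ 2 * (s - β)) / (β - α) ^ 2
  | 1 => fun s => (δ₁ * ((s - β) ^ 2 + 2 * (s - α) * (s - β))
      + δ₂ * (2 * (s - α) * (s - β) + (s - α) ^ 2)) / (β - α) ^ 2
  | 2 => fun s =>
      (δ₁ * (6 * (s - α) - 4 * (β - α)) + δ₂ * (6 * (s - α) - 2 * (β - α))) / (β - α) ^ 2
  | 3 => fun _ => 6 * (δ₁ + δ₂) / (β - α) ^ 2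
  | _ => fun _ => 0

end

theorem hasDerivAt_quarticBump (α β : ℝ) (i : ℕ) (u : ℝ) :
    HasDerivAt (quarticBump α β i) (quarticBump α β (i + 1) u) u := by
  have hα := (hasDerivAt_id' u).sub_const α
  have hβ := (hasDerivAt_id' u).sub_const β
  match i with
  | 0 =>
    refine (((hα.pow 2).mul (hβ.pow 2)).div_const 24).congr_deriv ?_
    simp only [quarticBump, Pi.pow_apply, zero_add]; ring
  | 1 =>
    refine (((hα.mul (hβ.pow 2)).add ((hα.pow 2).mul hβ)).div_const 12).congr_deriv ?_
    simp only [quarticBump, Pi.pow_apply, Nat.reduceAdd]; ring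
  | 2 =>
    refine ((((hα.pow 2).add ((hα.const_mul 4).mul hβ)).add (hβ.pow 2)).div_const 12).congr_deriv ?_
    simp only [quarticBump, Nat.reduceAdd]; ring
  | 3 => exact (hasDerivAt_id' u).sub_const _
  | 4 => exact hasDerivAt_const u 1
  | _ + 5 => exact hasDerivAt_const u 0

theorem hasDerivAt_hermiteCubic (α β δ₁ δ₂ : ℝ) (i : ℕ) (s : ℝ) :
    HasDerivAt (hermiteCubic α β δ₁ δ₂ i) (hermiteCubic α β δ₁ δ₂ (i + 1) s) s := by
  have hα := (hasDerivAt_id' s).sub_const α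
  have hβ := (hasDerivAt_id' s).sub_const β
  match i with
  | 0 =>
    refine ((((hα.const_mul δ₁).mul (hβ.pow 2)).add
      (((hα.pow 2).const_mul δ₂).mul hβ)).div_const ((β - α) ^ 2)).congr_deriv ?_
    simp only [hermiteCubic, Pi.pow_apply, zero_add]; ring
  | 1 =>
    refine (((((hβ.pow 2).add ((hα.const_mul 2).mul hβ)).const_mul δ₁).add
      ((((hα.const_mul 2).mul hβ).add (hα.pow 2)).const_mul δ₂)).div_const
        ((β - α) ^ 2)).congr_deriv ?_
    simp only [hermiteCubic, Nat.reduceAdd]; ring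
  | 2 =>
    refine ((((hα.const_mul 6).sub_const (4 * (β - α))).const_mul δ₁).add
      (((hα.const_mul 6).sub_const (2 * (β - α))).const_mul δ₂)).div_const
        ((β - α) ^ 2) |>.congr_deriv ?_
    simp only [hermiteCubic, Nat.reduceAdd]; ring
  | 3 => exact hasDerivAt_const s _
  | _ + 4 => exact hasDerivAt_const s 0

theorem continuous_quarticBump (α β : ℝ) (i : ℕ) : Continuous (quarticBump α β i) :=
  continuous_iff_continuousAt.2 fun u => (hasDerivAt_quarticBump α β i u).continuousAt

theorem continuous_hermiteCubic (α β δ₁ δ₂ : ℝ) (i : ℕ) : Continuous (hermiteCubic α β δ₁ δ₂ i) :=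
  continuous_iff_continuousAt.2 fun s => (hasDerivAt_hermiteCubic α β δ₁ δ₂ i s).continuousAt

section HermiteCubic

variable {α β δ₁ δ₂ : ℝ}

theorem hermiteCubic_one_left (h : α ≠ β) : hermiteCubic α β δ₁ δ₂ 1 α = δ₁ := by
  simp only [hermiteCubic]
  rw [div_eq_iff (pow_ne_zero 2 (sub_ne_zero.2 h.symm))]; ring

theorem hermiteCubic_one_right (h : α ≠ β) : hermiteCubic α β δ₁ δ₂ 1 β = δ₂ := by
  simp only [hermiteCubic]
  rw [div_eq_iff (pow_ne_zero 2 (sub_ne_zero.2 h.symm))]; ring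

theorem hermiteCubic_two_left_mul (h : α ≠ β) :
    hermiteCubic α β δ₁ δ₂ 2 α * (β - α) = -(4 * δ₁ + 2 * δ₂) := by
  simp only [hermiteCubic]
  field_simp [sub_ne_zero.2 h.symm]; ring

theorem hermiteCubic_two_right_mul (h : α ≠ β) :
    hermiteCubic α β δ₁ δ₂ 2 β * (β - α) = 2 * δ₁ + 4 * δ₂ := by
  simp only [hermiteCubic]
  field_simp [sub_ne_zero.2 h.symm]; ring

theorem abs_hermiteCubic_le {D s : ℝ} (hαβ : α < β) (hs : s ∈ Icc α β)
    (hδ₁ : |δ₁| ≤ D) (hδ₂ : |δ₂| ≤ D) : |hermiteCubic α β δ₁ δ₂ 0 s| ≤ D * (β - α) / 4 := by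
  have hsα : 0 ≤ s - α := sub_nonneg.2 hs.1
  have hβs : 0 ≤ β - s := sub_nonneg.2 hs.2
  have hh : 0 < (β - α) ^ 2 := pow_pos (sub_pos.2 hαβ) 2
  have hprod : (s - α) * (β - s) ≤ (β - α) ^ 2 / 4 := by nlinarith [sq_nonneg (s - α - (β - s))]
  have hcomb : |δ₁ * (β - s) - δ₂ * (s - α)| ≤ D * (β - α) := by
    refine (abs_sub _ _).trans ?_
    rw [abs_mul, abs_mul, abs_of_nonneg hsα, abs_of_nonneg hβs]
    nlinarith [mul_le_mul_of_nonneg_right hδ₁ hβs, mul_le_mul_of_nonneg_right hδ₂ hsα]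
  calc |hermiteCubic α β δ₁ δ₂ 0 s|
      = (s - α) * (β - s) * |δ₁ * (β - s) - δ₂ * (s - α)| / (β - α) ^ 2 := by
        rw [← abs_of_nonneg (mul_nonneg hsα hβs), ← abs_of_pos hh, ← abs_mul, ← abs_div]
        congr 1; simp only [hermiteCubic]; ring
    _ ≤ (β - α) ^ 2 / 4 * (D * (β - α)) / (β - α) ^ 2 := by gcongr
    _ = D * (β - α) / 4 := by field_simp

end HermiteCubic

section Rolle

variable {α β : ℝ} {f f' f'' : ℝ → ℝ}

theorem exists_hasDerivAt_eq_zero_of_le (hf : ContinuousOn f (Icc α β))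
    (hf' : ∀ s ∈ Ioo α β, HasDerivAt f (f' s) s) {a b : ℝ} (ha : α ≤ a) (hab : a < b)
    (hb : b ≤ β) (hfa : f a = 0) (hfb : f b = 0) : ∃ c ∈ Ioo a b, f' c = 0 :=
  exists_hasDerivAt_eq_zero hab (hf.mono (Icc_subset_Icc ha hb)) (hfa.trans hfb.symm)
    fun s hs => hf' s (Ioo_subset_Ioo ha hb hs)

theorem exists_second_deriv_eq_zero_of_three_zeros (hf : ContinuousOn f (Icc α β))
    (hf' : ∀ s ∈ Ioo α β, HasDerivAt f (f' s) s) (hf'' : ∀ s ∈ Ioo α β, HasDerivAt f' (f'' s) s)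
    {a b c : ℝ} (ha : α ≤ a) (hab : a < b) (hbc : b < c) (hc : c ≤ β)
    (hfa : f a = 0) (hfb : f b = 0) (hfc : f c = 0) : ∃ ξ ∈ Ioo α β, f'' ξ = 0 := by
  obtain ⟨z₁, hz₁, h₁⟩ := exists_hasDerivAt_eq_zero_of_le hf hf' ha hab (hbc.le.trans hc) hfa hfb
  obtain ⟨z₂, hz₂, h₂⟩ := exists_hasDerivAt_eq_zero_of_le hf hf' (ha.trans hab.le) hbc hc hfb hfc
  have hsub : Icc z₁ z₂ ⊆ Ioo α β := Icc_subset_Ioo (ha.trans_lt hz₁.1) (hz₂.2.trans_le hc)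
  obtain ⟨ξ, hξ, h⟩ := exists_hasDerivAt_eq_zero_of_le (f := f')
    (fun s hs => (hf'' s (hsub hs)).continuousAt.continuousWithinAt)
    (fun s hs => hf'' s (hsub (Ioo_subset_Icc_self hs))) le_rfl (hz₁.2.trans hz₂.1) le_rfl h₁ h₂
  exact ⟨ξ, hsub (Ioo_subset_Icc_self hξ), h⟩

theorem exists_two_second_deriv_zeros_of_double_zeros (hαβ : α < β) (hf : ContinuousOn f (Icc α β))
    (hf'c : ContinuousOn f' (Icc α β)) (hf' : ∀ s ∈ Ioo α β, HasDerivAt f (f' s) s)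
    (hf'' : ∀ s ∈ Ioo α β, HasDerivAt f' (f'' s) s) (hfα : f α = 0) (hfβ : f β = 0)
    (hf'α : f' α = 0) (hf'β : f' β = 0) :
    ∃ z₁ z₂, α < z₁ ∧ z₁ < z₂ ∧ z₂ < β ∧ f'' z₁ = 0 ∧ f'' z₂ = 0 := by
  obtain ⟨z, hz, h⟩ := exists_hasDerivAt_eq_zero_of_le hf hf' le_rfl hαβ le_rfl hfα hfβ
  obtain ⟨z₁, hz₁, h₁⟩ := exists_hasDerivAt_eq_zero_of_le hf'c hf'' le_rfl hz.1 hz.2.le hf'α h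
  obtain ⟨z₂, hz₂, h₂⟩ := exists_hasDerivAt_eq_zero_of_le hf'c hf'' hz.1.le hz.2 le_rfl h hf'β
  exact ⟨z₁, z₂, hz₁.1, hz₁.2.trans hz₂.1, hz₂.2, h₁, h₂⟩

theorem exists_three_second_deriv_zeros_of_double_zeros (hf : ContinuousOn f (Icc α β))
    (hf'c : ContinuousOn f' (Icc α β)) (hf' : ∀ s ∈ Ioo α β, HasDerivAt f (f' s) s)
    (hf'' : ∀ s ∈ Ioo α β, HasDerivAt f' (f'' s) s) {u : ℝ} (hu : u ∈ Ioo α β)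
    (hfα : f α = 0) (hfu : f u = 0) (hfβ : f β = 0) (hf'α : f' α = 0) (hf'β : f' β = 0) :
    ∃ z₁ z₂ z₃, α < z₁ ∧ z₁ < z₂ ∧ z₂ < z₃ ∧ z₃ < β ∧ f'' z₁ = 0 ∧ f'' z₂ = 0 ∧ f'' z₃ = 0 := by
  obtain ⟨r₁, hr₁, hf'r₁⟩ := exists_hasDerivAt_eq_zero_of_le hf hf' le_rfl hu.1 hu.2.le hfα hfu
  obtain ⟨r₂, hr₂, hf'r₂⟩ := exists_hasDerivAt_eq_zero_of_le hf hf' hu.1.le hu.2 le_rfl hfu hfβ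
  have hr₁₂ : r₁ < r₂ := hr₁.2.trans hr₂.1
  obtain ⟨z₁, hz₁, h₁⟩ := exists_hasDerivAt_eq_zero_of_le hf'c hf'' le_rfl hr₁.1
    (hr₁₂.le.trans hr₂.2.le) hf'α hf'r₁
  obtain ⟨z₂, hz₂, h₂⟩ :=
    exists_hasDerivAt_eq_zero_of_le hf'c hf'' hr₁.1.le hr₁₂ hr₂.2.le hf'r₁ hf'r₂
  obtain ⟨z₃, hz₃, h₃⟩ := exists_hasDerivAt_eq_zero_of_le hf'c hf'' (hr₁.1.le.trans hr₁₂.le)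
    hr₂.2 le_rfl hf'r₂ hf'β
  exact ⟨z₁, z₂, z₃, hz₁.1, hz₁.2.trans hz₂.1, hz₂.2.trans hz₃.1, hz₃.2, h₁, h₂, h₃⟩

end Rolle

section HermiteRemainder

variable {α β K : ℝ} {F : ℕ → ℝ → ℝ}

theorem HasDerivAt.sub_mul_quarticBump {f : ℝ → ℝ} {f' s : ℝ} (hf : HasDerivAt f f' s) (μ : ℝ)
    (i : ℕ) : HasDerivAt (fun s => f s - μ * quarticBump α β i s)
      (f' - μ * quarticBump α β (i + 1) s) s :=
  hf.sub ((hasDerivAt_quarticBump α β i s).const_mul μ)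

theorem ContinuousOn.sub_mul_quarticBump {f : ℝ → ℝ} {A : Set ℝ} (hf : ContinuousOn f A) (μ : ℝ)
    (i : ℕ) : ContinuousOn (fun s => f s - μ * quarticBump α β i s) A :=
  hf.sub ((continuous_quarticBump α β i).continuousOn.const_smul μ)

theorem abs_le_of_three_zeros_sub_mul_quarticBump (hF2 : ContinuousOn (F 2) (Icc α β))
    (hF : ∀ i < 4, ∀ s ∈ Ioo α β, HasDerivAt (F i) (F (i + 1) s) s)
    (hF4 : ∀ s ∈ Ioo α β, |F 4 s| ≤ K) {μ a b c : ℝ} (ha : α ≤ a) (hab : a < b) (hbc : b < c)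
    (hc : c ≤ β) (hFa : F 2 a - μ * quarticBump α β 2 a = 0)
    (hFb : F 2 b - μ * quarticBump α β 2 b = 0) (hFc : F 2 c - μ * quarticBump α β 2 c = 0) :
    |μ| ≤ K := by
  obtain ⟨ξ, hξ, h⟩ := exists_second_deriv_eq_zero_of_three_zeros (hF2.sub_mul_quarticBump μ 2)
    (fun s hs => (hF 2 (by norm_num) s hs).sub_mul_quarticBump μ 2)
    (fun s hs => (hF 3 (by norm_num) s hs).sub_mul_quarticBump μ 3) ha hab hbc hc hFa hFb hFc
  have hξ4 : F 4 ξ = μ := by simpa [quarticBump, sub_eq_zero] using h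
  exact hξ4 ▸ hF4 ξ hξ

theorem abs_le_of_double_zeros (hαβ : α < β) (hFc : ∀ i ≤ 2, ContinuousOn (F i) (Icc α β))
    (hF : ∀ i < 4, ∀ s ∈ Ioo α β, HasDerivAt (F i) (F (i + 1) s) s)
    (hF4 : ∀ s ∈ Ioo α β, |F 4 s| ≤ K) (hF0α : F 0 α = 0) (hF0β : F 0 β = 0)
    (hF1α : F 1 α = 0) (hF1β : F 1 β = 0) {u : ℝ} (hu : u ∈ Icc α β) :
    |F 0 u| ≤ K * (β - α) ^ 4 / 384 := by
  have hK : 0 ≤ K := (abs_nonneg _).trans (hF4 ((α + β) / 2) ⟨by linarith, by linarith⟩)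
  rcases eq_endpoints_or_mem_Ioo_of_mem_Icc hu with rfl | rfl | hu
  · rw [hF0α, abs_zero]; positivity
  · rw [hF0β, abs_zero]; positivity
  have hprod : 0 < (u - α) * (β - u) := mul_pos (sub_pos.2 hu.1) (sub_pos.2 hu.2)
  have hq_eq : quarticBump α β 0 u = ((u - α) * (β - u)) ^ 2 / 24 := by
    simp only [quarticBump]; ring
  have hq : 0 < quarticBump α β 0 u := by rw [hq_eq]; positivity
  have hq_le : quarticBump α β 0 u ≤ (β - α) ^ 4 / 384 := by
    have h : (u - α) * (β - u) ≤ (β - α) ^ 2 / 4 := by nlinarith [sq_nonneg (u - α - (β - u))]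
    calc quarticBump α β 0 u = ((u - α) * (β - u)) ^ 2 / 24 := hq_eq
      _ ≤ ((β - α) ^ 2 / 4) ^ 2 / 24 := by gcongr
      _ = (β - α) ^ 4 / 384 := by ring
  set μ := F 0 u / quarticBump α β 0 u
  have hFu : F 0 u = μ * quarticBump α β 0 u := (div_mul_cancel₀ _ hq.ne').symm
  obtain ⟨z₁, z₂, z₃, h₁, h₁₂, h₂₃, h₃, hz₁, hz₂, hz₃⟩ :=
    exists_three_second_deriv_zeros_of_double_zeros ((hFc 0 (by norm_num)).sub_mul_quarticBump μ 0)
      ((hFc 1 (by norm_num)).sub_mul_quarticBump μ 1)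
      (fun s hs => (hF 0 (by norm_num) s hs).sub_mul_quarticBump μ 0)
      (fun s hs => (hF 1 (by norm_num) s hs).sub_mul_quarticBump μ 1) hu
      (by simp [hF0α, quarticBump]) (sub_eq_zero.2 hFu) (by simp [hF0β, quarticBump])
      (by simp [hF1α, quarticBump]) (by simp [hF1β, quarticBump])
  calc |F 0 u| = |μ| * quarticBump α β 0 u := by rw [hFu, abs_mul, abs_of_pos hq]
    _ ≤ K * ((β - α) ^ 4 / 384) := mul_le_mul (abs_le_of_three_zeros_sub_mul_quarticBump
        (hFc 2 le_rfl) hF hF4 h₁.le h₁₂ h₂₃ h₃.le hz₁ hz₂ hz₃) hq_le hq.le hK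
    _ = K * (β - α) ^ 4 / 384 := by ring

theorem abs_second_le_of_double_zeros (hαβ : α < β)
    (hFc : ∀ i ≤ 2, ContinuousOn (F i) (Icc α β))
    (hF : ∀ i < 4, ∀ s ∈ Ioo α β, HasDerivAt (F i) (F (i + 1) s) s)
    (hF4 : ∀ s ∈ Ioo α β, |F 4 s| ≤ K) (hF0α : F 0 α = 0) (hF0β : F 0 β = 0)
    (hF1α : F 1 α = 0) (hF1β : F 1 β = 0) {p : ℝ} (hp : p = α ∨ p = β) :
    |F 2 p| ≤ K * (β - α) ^ 2 / 12 := by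
  have hq : quarticBump α β 2 p = (β - α) ^ 2 / 12 := by
    rcases hp with rfl | rfl <;> simp only [quarticBump] <;> ring
  have hq_pos : 0 < (β - α) ^ 2 / 12 := by have := sub_pos.2 hαβ; positivity
  set μ := F 2 p / ((β - α) ^ 2 / 12) with hμ
  have hFp : F 2 p - μ * quarticBump α β 2 p = 0 := by
    rw [hq, hμ, div_mul_cancel₀ _ hq_pos.ne', sub_self]
  obtain ⟨z₁, z₂, h₁, h₁₂, h₂, hz₁, hz₂⟩ := exists_two_second_deriv_zeros_of_double_zeros hαβ
    ((hFc 0 (by norm_num)).sub_mul_quarticBump (α := α) (β := β) μ 0)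
    ((hFc 1 (by norm_num)).sub_mul_quarticBump μ 1)
    (fun s hs => (hF 0 (by norm_num) s hs).sub_mul_quarticBump μ 0)
    (fun s hs => (hF 1 (by norm_num) s hs).sub_mul_quarticBump μ 1)
    (by simp [hF0α, quarticBump]) (by simp [hF0β, quarticBump])
    (by simp [hF1α, quarticBump]) (by simp [hF1β, quarticBump])
  have hμK : |μ| ≤ K := by
    rcases hp with rfl | rfl
    · exact abs_le_of_three_zeros_sub_mul_quarticBump (hFc 2 le_rfl) hF hF4
        le_rfl h₁ h₁₂ h₂.le hFp hz₁ hz₂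
    · exact abs_le_of_three_zeros_sub_mul_quarticBump (hFc 2 le_rfl) hF hF4
        h₁.le h₁₂ h₂ le_rfl hz₁ hz₂ hFp
  calc |F 2 p| = |μ| * ((β - α) ^ 2 / 12) := by
        rw [hμ, abs_div, abs_of_pos hq_pos, div_mul_cancel₀ _ hq_pos.ne']
    _ ≤ K * ((β - α) ^ 2 / 12) := mul_le_mul_of_nonneg_right hμK hq_pos.le
    _ = K * (β - α) ^ 2 / 12 := by ring

end HermiteRemainder

section IteratedDerivWithin

variable {𝕜 : Type*} [NontriviallyNormedField 𝕜] {G : Type*} [NormedAddCommGroup G]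
  [NormedSpace 𝕜 G] {f : 𝕜 → G} {s u : Set 𝕜}

theorem iteratedDerivWithin_eqOn_iterate_deriv (hu : IsOpen u) (hus : u ⊆ s) (n : ℕ) :
    EqOn (iteratedDerivWithin n f s) (deriv^[n] f) u := by
  intro y hy
  rw [← iteratedDerivWithin_of_isOpen_eq_iterate hu hy, iteratedDerivWithin, iteratedDerivWithin,
    ← iteratedFDerivWithin_inter_open hu hy, inter_eq_right.2 hus]

theorem hasDerivAt_iteratedDerivWithin (hu : IsOpen u) (hus : u ⊆ s) {n : ℕ} {y : 𝕜}
    (hy : y ∈ u) (hf : DifferentiableAt 𝕜 (deriv^[n] f) y) :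
    HasDerivAt (iteratedDerivWithin n f s) (iteratedDerivWithin (n + 1) f s y) y := by
  rw [iteratedDerivWithin_eqOn_iterate_deriv hu hus (n + 1) hy, Function.iterate_succ_apply']
  exact hf.hasDerivAt.congr_of_eventuallyEq
    (eventuallyEq_of_mem (hu.mem_nhds hy) (iteratedDerivWithin_eqOn_iterate_deriv hu hus n))

end IteratedDerivWithin

section SubPolynomial

variable {f g : ℝ → ℝ} {U : Set ℝ} {p : ℝ[X]} {N : ℕ}

theorem eqOn_iterate_deriv_sub_eval (hU : IsOpen U) (hg : EqOn g (fun r => f r - p.eval r) U)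
    (hf : ∀ i < N, ∀ y ∈ U, DifferentiableAt ℝ (deriv^[i] f) y) :
    ∀ i ≤ N, EqOn (deriv^[i] g) (fun y => deriv^[i] f y - (derivative^[i] p).eval y) U
  | 0, _ => hg
  | i + 1, hi => fun y hy => by
    have h := ((hf i hi y hy).hasDerivAt.sub (Polynomial.hasDerivAt _ y)).congr_of_eventuallyEq
      (eventuallyEq_of_mem (hU.mem_nhds hy)
        (eqOn_iterate_deriv_sub_eval hU hg hf i (Nat.le_of_succ_le hi)))
    simp only [Function.iterate_succ_apply', h.deriv]

theorem iterate_deriv_of_eqOn_sub_eval (hU : IsOpen U) (hg : EqOn g (fun r => f r - p.eval r) U)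
    (hp : p.natDegree < N) (hf : ∀ i < N, ∀ y ∈ U, DifferentiableAt ℝ (deriv^[i] f) y) :
    (∀ i < N, ∀ y ∈ U, DifferentiableAt ℝ (deriv^[i] g) y) ∧
      EqOn (deriv^[N] g) (deriv^[N] f) U := by
  refine ⟨fun i hi y hy => ?_, fun y hy => ?_⟩
  · exact ((hf i hi y hy).sub (Polynomial.differentiableAt _)).congr_of_eventuallyEq
      (eventuallyEq_of_mem (hU.mem_nhds hy) (eqOn_iterate_deriv_sub_eval hU hg hf i hi.le))
  · simp [eqOn_iterate_deriv_sub_eval hU hg hf N le_rfl hy, iterate_derivative_eq_zero hp]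

end SubPolynomial

theorem hermite_remainder_estimates {S : Set ℝ} {E f : ℝ → ℝ} {p : ℝ[X]} {α β K : ℝ}
    (hαβ : α < β) (hS : UniqueDiffOn ℝ S) (hαβS : Icc α β ⊆ S) (hE : ContDiffOn ℝ 2 E S)
    (hp : p.degree ≤ 3) (hEf : EqOn E (fun r => f r - p.eval r) (Icc α β))
    (hf : ∀ s ∈ Ioo α β, (∀ i < 4, DifferentiableAt ℝ (deriv^[i] f) s) ∧ |deriv^[4] f s| ≤ K)
    (hEα : E α = 0) (hEβ : E β = 0) :
    (∀ u ∈ Icc α β, |E u - hermiteCubic α β (derivWithin E S α) (derivWithin E S β) 0 u|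
        ≤ K * (β - α) ^ 4 / 384) ∧
      |iteratedDerivWithin 2 E S α * (β - α) + 4 * derivWithin E S α + 2 * derivWithin E S β|
        ≤ K * (β - α) ^ 3 / 12 ∧
      |iteratedDerivWithin 2 E S β * (β - α) - 2 * derivWithin E S α - 4 * derivWithin E S β|
        ≤ K * (β - α) ^ 3 / 12 := by
  have hIoo : Ioo α β ⊆ S := Ioo_subset_Icc_self.trans hαβS
  obtain ⟨hE', hE4⟩ := iterate_deriv_of_eqOn_sub_eval isOpen_Ioo (hEf.mono Ioo_subset_Icc_self)
    ((natDegree_le_of_degree_le hp).trans_lt (by norm_num)) fun i hi s hs => (hf s hs).1 i hi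
  set F : ℕ → ℝ → ℝ := fun i s =>
    iteratedDerivWithin i E S s - hermiteCubic α β (derivWithin E S α) (derivWithin E S β) i s
  have hFc : ∀ i ≤ 2, ContinuousOn (F i) (Icc α β) := fun i hi =>
    ((hE.continuousOn_iteratedDerivWithin (by exact_mod_cast hi) hS).mono hαβS).sub
      (continuous_hermiteCubic _ _ _ _ i).continuousOn
  have hF : ∀ i < 4, ∀ s ∈ Ioo α β, HasDerivAt (F i) (F (i + 1) s) s := fun i hi s hs =>
    (hasDerivAt_iteratedDerivWithin isOpen_Ioo hIoo hs (hE' i hi s hs)).sub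
      (hasDerivAt_hermiteCubic _ _ _ _ i s)
  have hF4 : ∀ s ∈ Ioo α β, |F 4 s| ≤ K := fun s hs => by
    simpa [F, hermiteCubic, iteratedDerivWithin_eqOn_iterate_deriv isOpen_Ioo hIoo 4 hs, hE4 hs]
      using (hf s hs).2
  have hF0α : F 0 α = 0 := by simp [F, hEα, hermiteCubic]
  have hF0β : F 0 β = 0 := by simp [F, hEβ, hermiteCubic]
  have hF1α : F 1 α = 0 := by
    simp only [F, iteratedDerivWithin_one, hermiteCubic_one_left hαβ.ne, sub_self]
  have hF1β : F 1 β = 0 := by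
    simp only [F, iteratedDerivWithin_one, hermiteCubic_one_right hαβ.ne, sub_self]
  have hF2α : F 2 α * (β - α) = iteratedDerivWithin 2 E S α * (β - α)
      + 4 * derivWithin E S α + 2 * derivWithin E S β := by
    simp only [F, sub_mul, hermiteCubic_two_left_mul hαβ.ne]; ring
  have hF2β : F 2 β * (β - α) = iteratedDerivWithin 2 E S β * (β - α)
      - 2 * derivWithin E S α - 4 * derivWithin E S β := by
    simp only [F, sub_mul, hermiteCubic_two_right_mul hαβ.ne]; ring
  have hh : 0 < β - α := sub_pos.2 hαβ
  have hcurv : ∀ p, p = α ∨ p = β → |F 2 p * (β - α)| ≤ K * (β - α) ^ 3 / 12 := fun p hp => by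
    rw [abs_mul, abs_of_pos hh]
    exact (mul_le_mul_of_nonneg_right
      (abs_second_le_of_double_zeros hαβ hFc hF hF4 hF0α hF0β hF1α hF1β hp) hh.le).trans_eq
      (by ring)
  refine ⟨fun u hu => ?_, hF2α ▸ hcurv α (.inl rfl), hF2β ▸ hcurv β (.inr rfl)⟩
  simpa [F] using abs_le_of_double_zeros hαβ hFc hF hF4 hF0α hF0β hF1α hF1β hu

theorem abs_le_of_local_knot_bounds {h h' τ K σ a m b : ℝ} (hh : 0 < h) (hh' : 0 < h')
    (hτ : h ≤ τ) (hτ' : h' ≤ τ) (hl : |σ * h - 2 * a - 4 * m| ≤ K * h ^ 3 / 12)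
    (hr : |σ * h' + 4 * m + 2 * b| ≤ K * h' ^ 3 / 12) (ha : |a| ≤ |m|) (hb : |b| ≤ |m|) :
    |m| ≤ K * τ ^ 3 / 24 := by
  have hK : 0 ≤ K := by nlinarith [abs_nonneg (σ * h - 2 * a - 4 * m), pow_pos hh 3]
  obtain ⟨hl₁, hl₂⟩ := abs_le.1 hl
  obtain ⟨hr₁, hr₂⟩ := abs_le.1 hr
  obtain ⟨ha₁, ha₂⟩ := abs_le.1 ha
  obtain ⟨hb₁, hb₂⟩ := abs_le.1 hb
  -- eliminate `σ` between the two bounds, then use `|a|, |b| ≤ |m|`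
  have key : 2 * |m| * (h + h') ≤ K * (h' * h ^ 3 + h * h' ^ 3) / 12 := by
    rcases abs_cases m with ⟨hm, -⟩ | ⟨hm, -⟩ <;> rw [hm] at ha₁ ha₂ hb₁ hb₂ ⊢
    · linarith [mul_le_mul_of_nonneg_left hl₁ hh'.le, mul_le_mul_of_nonneg_left hr₂ hh.le,
        mul_le_mul_of_nonneg_left ha₁ hh'.le, mul_le_mul_of_nonneg_left hb₁ hh.le]
    · linarith [mul_le_mul_of_nonneg_left hl₂ hh'.le, mul_le_mul_of_nonneg_left hr₁ hh.le,
        mul_le_mul_of_nonneg_left ha₂ hh'.le, mul_le_mul_of_nonneg_left hb₂ hh.le]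
  have hτ3 : K * (h' * h ^ 3 + h * h' ^ 3) / 12 ≤ K * τ ^ 3 / 12 * (h + h') := by
    have : h' * h ^ 3 + h * h' ^ 3 ≤ τ ^ 3 * (h + h') := by
      nlinarith [pow_le_pow_left₀ hh.le hτ 3, pow_le_pow_left₀ hh'.le hτ' 3]
    nlinarith [mul_le_mul_of_nonneg_left this hK]
  linarith [le_of_mul_le_mul_right (key.trans hτ3) (add_pos hh hh')]

theorem forall_abs_le_of_knot_bounds {n : ℕ} (hn : 1 ≤ n) {t m σ : ℕ → ℝ} {K τ : ℝ}
    (ht : ∀ k < n, t k < t (k + 1)) (hτ : ∀ k < n, t (k + 1) - t k ≤ τ)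
    (hσ₀ : σ 0 = 0) (hσn : σ n = 0)
    (hl : ∀ k < n, |σ k * (t (k + 1) - t k) + 4 * m k + 2 * m (k + 1)|
      ≤ K * (t (k + 1) - t k) ^ 3 / 12)
    (hr : ∀ k < n, |σ (k + 1) * (t (k + 1) - t k) - 2 * m k - 4 * m (k + 1)|
      ≤ K * (t (k + 1) - t k) ^ 3 / 12) :
    ∀ k ≤ n, |m k| ≤ K * τ ^ 3 / 24 := by
  obtain ⟨j, hj, hmax⟩ := (Finset.range (n + 1)).exists_max_image (fun k => |m k|) ⟨0, by simp⟩
  replace hmax : ∀ k ≤ n, |m k| ≤ |m j| := fun k hk =>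
    hmax k (Finset.mem_range.2 (Nat.lt_succ_of_le hk))
  replace hj : j ≤ n := Nat.lt_succ_iff.1 (Finset.mem_range.1 hj)
  suffices h : |m j| ≤ K * τ ^ 3 / 24 from fun k hk => (hmax k hk).trans h
  have hpos : ∀ k < n, 0 < t (k + 1) - t k := fun k hk => sub_pos.2 (ht k hk)
  rcases Nat.eq_zero_or_pos j with rfl | hj₀
  · -- at an end knot `σ` vanishes, and the one available bound serves as both sides
    have h := hl 0 hn
    rw [hσ₀] at h
    exact abs_le_of_local_knot_bounds (hpos 0 hn) (hpos 0 hn) (hτ 0 hn) (hτ 0 hn)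
      (by rw [← abs_neg]; convert h using 2; ring) h (hmax 1 hn) (hmax 1 hn)
  obtain ⟨i, rfl⟩ : ∃ i, j = i + 1 := ⟨j - 1, by omega⟩
  rcases (show i + 1 < n ∨ i + 1 = n by omega) with hin | rfl
  · exact abs_le_of_local_knot_bounds (hpos i (by omega)) (hpos (i + 1) hin) (hτ i (by omega))
      (hτ (i + 1) hin) (hr i (by omega)) (hl (i + 1) hin) (hmax i (by omega)) (hmax (i + 2) hin)
  · have h := hr i (by omega)
    rw [hσn] at h
    have hi : i < i + 1 := Nat.lt_succ_self i
    exact abs_le_of_local_knot_bounds (hpos i hi) (hpos i hi) (hτ i hi) (hτ i hi) h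
      (by rw [← abs_neg]; convert h using 2; ring) (hmax i (by omega)) (hmax i (by omega))

theorem apply_le_apply_of_forall_lt_succ {t : ℕ → ℝ} {n : ℕ} (ht : ∀ k < n, t k < t (k + 1))
    {j k : ℕ} (hjk : j ≤ k) (hkn : k ≤ n) : t j ≤ t k := by
  induction hjk with
  | refl => exact le_rfl
  | step _ ih => exact (ih (by omega)).trans (ht _ (by omega)).le

theorem exists_lt_mem_Icc_of_mem_Icc {t : ℕ → ℝ} {n : ℕ} (hn : 1 ≤ n) {s : ℝ}
    (hs : s ∈ Icc (t 0) (t n)) : ∃ k < n, s ∈ Icc (t k) (t (k + 1)) := by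
  classical
  have hP : ∃ k, s ≤ t (k + 1) := ⟨n - 1, by rw [Nat.sub_add_cancel hn]; exact hs.2⟩
  refine ⟨Nat.find hP, ?_, ?_, Nat.find_spec hP⟩
  · have := Nat.find_min' hP (m := n - 1) (by rw [Nat.sub_add_cancel hn]; exact hs.2)
    omega
  · rcases Nat.eq_zero_or_pos (Nat.find hP) with h | h
    · rw [h]; exact hs.1
    · have := Nat.find_min hP (Nat.sub_lt h one_pos)
      rw [Nat.sub_add_cancel (show 1 ≤ Nat.find hP from h), not_le] at this
      exact this.le

/-- Theorem 2, r = 0 case: interpolation error bound of CSSC. With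
`ô = o + c` where `c` is piecewise cubic on the partition, `e = x − ô` is `C²` on `[a,b]`,
`x − o` is four times differentiable with `|(x − o)⁗| ≤ K` on each open subinterval,
`e` vanishes at all knots and satisfies the natural boundary condition, then
`|x(t) − ô(t)| ≤ (5/384)·K·τ⁴` on `[a,b]`. -/
theorem cssc_error_bound (n : ℕ) (hn : 1 ≤ n) (t : ℕ → ℝ)
    (ht : ∀ k, 1 ≤ k → k ≤ n → t (k - 1) < t k)
    (τ : ℝ) (hτ : ∀ k, 1 ≤ k → k ≤ n → t k - t (k - 1) ≤ τ)
    (K : ℝ) (hK : 0 ≤ K) (x o c : ℝ → ℝ)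
    (hpc : ∀ k, 1 ≤ k → k ≤ n → ∃ p : Polynomial ℝ, p.degree ≤ 3 ∧
      ∀ s ∈ Set.Icc (t (k - 1)) (t k), c s = p.eval s)
    (hC2 : ContDiffOn ℝ 2 (fun s => x s - (o s + c s)) (Set.Icc (t 0) (t n)))
    (hdiff4 : ∀ k, 1 ≤ k → k ≤ n → ∀ s ∈ Set.Ioo (t (k - 1)) (t k),
      (∀ i < 4, DifferentiableAt ℝ (deriv^[i] (fun r => x r - o r)) s) ∧
        |deriv^[4] (fun r => x r - o r) s| ≤ K)
    (hknots : ∀ k ≤ n, x (t k) - (o (t k) + c (t k)) = 0)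
    (hbda : iteratedDerivWithin 2 (fun s => x s - (o s + c s)) (Set.Icc (t 0) (t n)) (t 0) = 0)
    (hbdb : iteratedDerivWithin 2 (fun s => x s - (o s + c s)) (Set.Icc (t 0) (t n)) (t n) = 0) :
    ∀ s ∈ Set.Icc (t 0) (t n), |x s - (o s + c s)| ≤ (5 / 384) * K * τ ^ 4 := by
  have ht' : ∀ k < n, t k < t (k + 1) := fun k hk => ht (k + 1) (by omega) hk
  have hτ' : ∀ k < n, t (k + 1) - t k ≤ τ := fun k hk => hτ (k + 1) (by omega) hk
  have hsub : ∀ k < n, Icc (t k) (t (k + 1)) ⊆ Icc (t 0) (t n) := fun k hk =>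
    Icc_subset_Icc (apply_le_apply_of_forall_lt_succ ht' k.zero_le hk.le)
      (apply_le_apply_of_forall_lt_succ ht' hk le_rfl)
  have hS := uniqueDiffOn_Icc ((ht' 0 hn).trans_le (apply_le_apply_of_forall_lt_succ ht' hn le_rfl))
  choose p hp hcp using hpc
  have hpiece := fun k (hk : k < n) => hermite_remainder_estimates (ht' k hk) hS (hsub k hk) hC2
    (hp (k + 1) (by omega) hk) (fun s hs => by simp only [hcp (k + 1) (by omega) hk s hs]; ring)
    (hdiff4 (k + 1) (by omega) hk) (hknots k hk.le) (hknots (k + 1) hk)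
  have hslope := forall_abs_le_of_knot_bounds hn ht' hτ' hbda hbdb
    (fun k hk => (hpiece k hk).2.1) (fun k hk => (hpiece k hk).2.2)
  intro s hs
  obtain ⟨k, hk, hsk⟩ := exists_lt_mem_Icc_of_mem_Icc hn hs
  have hh : 0 ≤ t (k + 1) - t k := (sub_pos.2 (ht' k hk)).le
  have hτ₀ : 0 ≤ τ := hh.trans (hτ' k hk)
  calc |x s - (o s + c s)| ≤ _ + _ := sub_le_iff_le_add'.1 (abs_sub_abs_le_abs_sub _ _)
    _ ≤ K * τ ^ 3 / 24 * (t (k + 1) - t k) / 4 + K * (t (k + 1) - t k) ^ 4 / 384 :=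
      add_le_add (abs_hermiteCubic_le (ht' k hk) hsk (hslope k hk.le) (hslope (k + 1) hk))
        ((hpiece k hk).1 s hsk)
    _ ≤ K * τ ^ 3 / 24 * τ / 4 + K * τ ^ 4 / 384 := by gcongr <;> exact hτ' k hk
    _ = 5 / 384 * K * τ ^ 4 := by ring
end
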